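/- arXiv:1611.02058 — 2 statements merged into one kernel-verified Lean document; each statement's English description precedes it below -/
import Mathlib

section
/- Let f : ℝ → ℝ be continuous, F(t) = ∫₀ᵗ f(s) ds, and 𝓕(t) = f(t)t − 2F(t). Suppose there exists θ ≥ 1 such that θ𝓕(t) ≥ 𝓕(σt) for all t ∈ ℝ and σ ∈ [0,1], and that f(t) = o(|t|) as t → 0. Then F(t) ≥ 0 for all t ∈ ℝ. -/
open MeasureTheory Filter Topology Set Metric

theorem stmt1 (f : ℝ → ℝ) (hf : Continuous f)
    (F : ℝ → ℝ) (hF : ∀ t, F t = ∫ s in (0:ℝ)..t, f s)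
    (𝓕 : ℝ → ℝ) (h𝓕 : ∀ t, 𝓕 t = f t * t - 2 * F t)
    (θ : ℝ) (hθ : 1 ≤ θ)
    (h3 : ∀ t : ℝ, ∀ σ ∈ Set.Icc (0:ℝ) 1, θ * 𝓕 t ≥ 𝓕 (σ * t))
    (h2 : Tendsto (fun t => f t / |t|) (𝓝[≠] (0:ℝ)) (𝓝 0)) :
    ∀ t : ℝ, 0 ≤ F t := by
  -- F is an antiderivative of f
  have hFd : ∀ x : ℝ, HasDerivAt F (f x) x := by
    intro x
    have h := (hf.integral_hasStrictDerivAt 0 x).hasDerivAt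
    have : F = fun u => ∫ s in (0:ℝ)..u, f s := funext hF
    rw [this]
    exact h
  -- f 0 = 0
  have hf0 : f 0 = 0 := by
    have h1 : Tendsto f (𝓝[≠] (0:ℝ)) (𝓝 0) := by
      have habs : Tendsto (fun t : ℝ => |t|) (𝓝[≠] (0:ℝ)) (𝓝 0) := by
        have : Tendsto (fun t : ℝ => |t|) (𝓝 (0:ℝ)) (𝓝 0) := by
          simpa using continuous_abs.tendsto (0:ℝ)
        exact this.mono_left nhdsWithin_le_nhds
      have := h2.mul habs
      rw [zero_mul] at this
      refine this.congr' ?_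
      filter_upwards [self_mem_nhdsWithin] with t ht
      have : |t| ≠ 0 := by simpa [abs_eq_zero] using ht
      field_simp
    have h2' : Tendsto f (𝓝[≠] (0:ℝ)) (𝓝 (f 0)) :=
      (hf.tendsto 0).mono_left nhdsWithin_le_nhds
    exact tendsto_nhds_unique h2' h1
  -- derivative of the rescaled function
  have hderiv : ∀ (u σ : ℝ), σ ≠ 0 →
      HasDerivAt (fun σ => F (σ * u) / σ ^ 2) (𝓕 (σ * u) / σ ^ 3) σ := by
    intro u σ hσ
    have h1 : HasDerivAt (fun σ : ℝ => F (σ * u)) (f (σ * u) * u) σ :=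
      (hFd (σ * u)).comp σ (hasDerivAt_mul_const u)
    have h2' : HasDerivAt (fun σ : ℝ => σ ^ 2) (2 * σ) σ := by
      simpa using hasDerivAt_pow 2 σ
    have h := h1.div h2' (pow_ne_zero 2 hσ)
    refine h.congr_deriv ?_
    rw [h𝓕]
    field_simp
  -- limit of the rescaled function at 0⁺
  have hlim : ∀ u : ℝ, Tendsto (fun σ => F (σ * u) / σ ^ 2) (𝓝[>] (0:ℝ)) (𝓝 0) := by
    intro u
    rw [Metric.tendsto_nhdsWithin_nhds]
    intro ε hε
    have hε' : 0 < ε / (2 * (u ^ 2 + 1)) := by positivity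
    obtain ⟨δ', hδ', hb⟩ := (Metric.tendsto_nhdsWithin_nhds.mp h2) _ hε'
    refine ⟨δ' / (|u| + 1), by positivity, ?_⟩
    intro σ hσ hd
    have hσ0 : 0 < σ := hσ
    have habs : ∀ s : ℝ, |s| ≤ |σ * u| → |f s| ≤ ε / (2 * (u ^ 2 + 1)) * |σ * u| := by
      intro s hs
      rcases eq_or_ne s 0 with rfl | hs0
      · rw [hf0]; simp; positivity
      · have hsmem : s ∈ ({(0:ℝ)}ᶜ : Set ℝ) := hs0
        have hsd : dist s 0 < δ' := by
          rw [Real.dist_eq, sub_zero]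
          calc |s| ≤ |σ * u| := hs
            _ = σ * |u| := by rw [abs_mul, abs_of_pos hσ0]
            _ < δ' / (|u| + 1) * (|u| + 1) := by
                have hd' : σ < δ' / (|u| + 1) := by
                  rwa [Real.dist_eq, sub_zero, abs_of_pos hσ0] at hd
                have : σ * |u| ≤ σ * (|u| + 1) := by nlinarith [abs_nonneg u]
                calc σ * |u| ≤ σ * (|u| + 1) := this
                  _ < δ' / (|u| + 1) * (|u| + 1) := by
                      apply mul_lt_mul_of_pos_right hd'; positivity
            _ = δ' := by field_simp
        have := hb hsmem hsd
        rw [Real.dist_eq, sub_zero] at this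
        have h1 : |f s| / |s| < ε / (2 * (u ^ 2 + 1)) := by
          rwa [abs_div, abs_abs] at this
        have hsp : 0 < |s| := abs_pos.mpr hs0
        have : |f s| < ε / (2 * (u ^ 2 + 1)) * |s| := by
          rw [div_lt_iff₀ hsp] at h1; linarith
        calc |f s| ≤ ε / (2 * (u ^ 2 + 1)) * |s| := this.le
          _ ≤ ε / (2 * (u ^ 2 + 1)) * |σ * u| := by
              apply mul_le_mul_of_nonneg_left hs; positivity
    have hFb : |F (σ * u)| ≤ ε / (2 * (u ^ 2 + 1)) * |σ * u| * |σ * u| := by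
      rw [hF]
      have := intervalIntegral.norm_integral_le_of_norm_le_const
        (f := f) (a := (0:ℝ)) (b := σ * u) (C := ε / (2 * (u ^ 2 + 1)) * |σ * u|) ?_
      · simpa using this
      · intro x hx
        have hx' : |x| ≤ |σ * u| := by
          rcases le_total 0 (σ * u) with h' | h'
          · rw [uIoc_of_le h'] at hx
            rw [abs_of_pos hx.1, abs_of_nonneg h']; exact hx.2
          · rw [uIoc_of_ge h'] at hx
            rw [abs_of_nonpos hx.2, abs_of_nonpos h']
            linarith [hx.1]
        exact habs x hx'
    rw [Real.dist_eq, sub_zero]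
    have hσ2 : (0:ℝ) < σ ^ 2 := by positivity
    rw [abs_div, abs_of_pos hσ2]
    rw [div_lt_iff₀ hσ2]
    calc |F (σ * u)| ≤ ε / (2 * (u ^ 2 + 1)) * |σ * u| * |σ * u| := hFb
      _ = ε / (2 * (u ^ 2 + 1)) * u ^ 2 * σ ^ 2 := by
          rw [abs_mul, abs_of_pos hσ0]; ring_nf; rw [sq_abs]; ring
      _ < ε * σ ^ 2 := by
          have : ε / (2 * (u ^ 2 + 1)) * u ^ 2 < ε := by
            rw [div_mul_eq_mul_div, div_lt_iff₀ (by positivity)]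
            nlinarith
          exact mul_lt_mul_of_pos_right this hσ2
  -- Step 2: 𝓕 is nonnegative everywhere
  have hFF : ∀ u : ℝ, 0 ≤ 𝓕 u := by
    intro u
    by_contra hneg
    push_neg at hneg
    set k : ℝ → ℝ := fun σ => F (σ * u) / σ ^ 2 + θ * 𝓕 u / 2 * (σ ^ 2)⁻¹ with hk
    have hkd : ∀ σ : ℝ, σ ≠ 0 →
        HasDerivAt k (𝓕 (σ * u) / σ ^ 3 - θ * 𝓕 u / σ ^ 3) σ := by
      intro σ hσ
      have hc : HasDerivAt (fun σ : ℝ => θ * 𝓕 u / 2 * (σ ^ 2)⁻¹)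
          (-(θ * 𝓕 u / σ ^ 3)) σ := by
        have hp : HasDerivAt (fun σ : ℝ => (σ ^ 2)⁻¹) (-(2 * σ) / (σ ^ 2) ^ 2) σ := by
          have h2' : HasDerivAt (fun σ : ℝ => σ ^ 2) (2 * σ) σ := by
            simpa using hasDerivAt_pow 2 σ
          exact h2'.inv (pow_ne_zero 2 hσ)
        have := hp.const_mul (θ * 𝓕 u / 2)
        refine this.congr_deriv ?_
        field_simp
      have := (hderiv u σ hσ).add hc
      exact this.congr_deriv (sub_eq_add_neg _ _).symm
    have hmono : ∀ a ∈ Ioc (0:ℝ) 1, k 1 ≤ k a := by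
      intro a ha
      have hanti : AntitoneOn k (Icc a 1) := by
        apply antitoneOn_of_deriv_nonpos (convex_Icc a 1)
        · intro x hx
          exact (hkd x (ne_of_gt (lt_of_lt_of_le ha.1 hx.1))).continuousAt.continuousWithinAt
        · rw [interior_Icc]
          intro x hx
          exact ((hkd x (ne_of_gt (ha.1.trans hx.1))).differentiableAt).differentiableWithinAt
        · rw [interior_Icc]
          intro x hx
          have hx0 : 0 < x := ha.1.trans hx.1
          rw [(hkd x hx0.ne').deriv]
          have h3' := h3 u x ⟨hx0.le, hx.2.le⟩
          have hx3 : 0 < x ^ 3 := by positivity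
          rw [div_sub_div_same]
          apply div_nonpos_of_nonpos_of_nonneg
          · linarith [h3']
          · exact hx3.le
      exact hanti ⟨le_refl a, ha.2⟩ ⟨ha.2, le_refl 1⟩ ha.2
    -- k tends to -∞ at 0⁺
    have hsq : Tendsto (fun σ : ℝ => σ ^ 2) (𝓝[>] (0:ℝ)) (𝓝[>] 0) := by
      apply tendsto_nhdsWithin_of_tendsto_nhds_of_eventually_within
      · have : Tendsto (fun σ : ℝ => σ ^ 2) (𝓝 (0:ℝ)) (𝓝 (0 ^ 2)) :=
          (continuous_pow 2).tendsto 0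
        simpa using this.mono_left nhdsWithin_le_nhds
      · filter_upwards [self_mem_nhdsWithin] with x hx
        exact pow_pos (show (0:ℝ) < x from hx) 2
    have hinv : Tendsto (fun σ : ℝ => (σ ^ 2)⁻¹) (𝓝[>] (0:ℝ)) atTop :=
      tendsto_inv_nhdsGT_zero.comp hsq
    have hcoef : θ * 𝓕 u / 2 < 0 := by
      have hθ0 : 0 < θ := lt_of_lt_of_le one_pos hθ
      have : θ * 𝓕 u < 0 := mul_neg_of_pos_of_neg hθ0 hneg
      linarith
    have hbot : Tendsto (fun σ : ℝ => θ * 𝓕 u / 2 * (σ ^ 2)⁻¹) (𝓝[>] (0:ℝ)) atBot :=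
      hinv.const_mul_atTop_of_neg hcoef
    have hkbot : Tendsto k (𝓝[>] (0:ℝ)) atBot := (hlim u).add_atBot hbot
    have hev1 : ∀ᶠ σ in 𝓝[>] (0:ℝ), k σ < k 1 :=
      hkbot.eventually (eventually_lt_atBot (k 1))
    have hev2 : ∀ᶠ σ in 𝓝[>] (0:ℝ), σ ∈ Ioc (0:ℝ) 1 := by
      filter_upwards [Ioo_mem_nhdsGT_of_mem (⟨le_refl 0, one_pos⟩ : (0:ℝ) ∈ Ico (0:ℝ) 1)]
        with x hx
      exact ⟨hx.1, hx.2.le⟩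
    obtain ⟨σ, h1, h2''⟩ := (hev1.and hev2).exists
    exact absurd (hmono σ h2'') (not_le.mpr h1)
  -- Step 3: conclusion
  intro t
  have hg1 : ∀ᶠ σ in 𝓝[>] (0:ℝ), F (σ * t) / σ ^ 2 ≤ F t := by
    filter_upwards [Ioo_mem_nhdsGT_of_mem (⟨le_refl 0, one_pos⟩ : (0:ℝ) ∈ Ico (0:ℝ) 1)]
      with a ha
    have hmono : MonotoneOn (fun σ => F (σ * t) / σ ^ 2) (Icc a 1) := by
      apply monotoneOn_of_deriv_nonneg (convex_Icc a 1)
      · intro x hx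
        exact (hderiv t x (ne_of_gt (lt_of_lt_of_le ha.1 hx.1))).continuousAt.continuousWithinAt
      · rw [interior_Icc]
        intro x hx
        exact ((hderiv t x (ne_of_gt (ha.1.trans hx.1))).differentiableAt).differentiableWithinAt
      · rw [interior_Icc]
        intro x hx
        have hx0 : 0 < x := ha.1.trans hx.1
        rw [(hderiv t x hx0.ne').deriv]
        exact div_nonneg (hFF (x * t)) (by positivity)
    have := hmono ⟨le_refl a, ha.2.le⟩ ⟨ha.2.le, le_refl 1⟩ ha.2.le
    simpa using this
  have := le_of_tendsto (hlim t) hg1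
  linarith
end

section
/- Let f : ℝ → ℝ be continuous with lim_{|t|→∞} f(t)t/|t|² = +∞. Then lim_{|t|→∞} F(t)/|t|² = +∞, where F(t) = ∫₀ᵗ f(s) ds. -/
open MeasureTheory Filter Topology Set Metric

private lemma auxdiv (C K t Ft : ℝ) (ht : |K| + 1 ≤ t ^ 2)
    (hle : K + 2 * (C + 1) * t ^ 2 / 2 ≤ Ft) : C ≤ Ft / t ^ 2 := by
  have ht0 : 0 < t ^ 2 := by nlinarith [abs_nonneg K]
  rw [le_div_iff₀ ht0]
  nlinarith [neg_abs_le K]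

theorem stmt6 (f : ℝ → ℝ) (hf : Continuous f)
    (hinf : Tendsto (fun t => f t * t / t ^ 2) (cocompact ℝ) atTop) :
    Tendsto (fun t => (∫ s in (0:ℝ)..t, f s) / t ^ 2) (cocompact ℝ) atTop := by
  rw [cocompact_eq_atBot_atTop] at hinf ⊢
  rw [tendsto_sup] at hinf ⊢
  obtain ⟨hbot, htop⟩ := hinf
  constructor
  · -- atBot case
    rw [Filter.tendsto_atTop]
    intro C
    set M := 2 * (C + 1) with hM
    have h1 : ∀ᶠ t in atBot, M ≤ f t * t / t ^ 2 := hbot.eventually_ge_atTop M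
    obtain ⟨A, hA⟩ := (h1.and (eventually_le_atBot (-1 : ℝ))).exists_forall_of_atBot
    -- hA : ∀ t ≤ A, M ≤ f t * t / t^2 ∧ t ≤ -1
    have hA1 : A ≤ -1 := (hA A le_rfl).2
    have hfs : ∀ s ≤ A, f s ≤ M * s := by
      intro s hs
      have hs1 : s ≤ -1 := le_trans hs hA1
      have hsneg : s < 0 := lt_of_le_of_lt hs1 (by norm_num)
      have h2 := (hA s hs).1
      have hsq : 0 < s ^ 2 := pow_two_pos_of_ne_zero hsneg.ne
      rw [le_div_iff₀ hsq] at h2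
      nlinarith
    set K := (∫ s in (0:ℝ)..A, f s) - M * A ^ 2 / 2 with hK
    have key : ∀ t ≤ A, K + M * t ^ 2 / 2 ≤ ∫ s in (0:ℝ)..t, f s := by
      intro t ht
      have hint1 : IntervalIntegrable f volume 0 t := hf.intervalIntegrable _ _
      have hint2 : IntervalIntegrable f volume t A := hf.intervalIntegrable _ _
      have hadd : (∫ s in (0:ℝ)..t, f s) + ∫ s in t..A, f s = ∫ s in (0:ℝ)..A, f s :=
        intervalIntegral.integral_add_adjacent_intervals hint1 hint2
      have hmono : (∫ s in t..A, f s) ≤ ∫ s in t..A, M * s := by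
        apply intervalIntegral.integral_mono_on ht hint2
          ((continuous_const.mul continuous_id).intervalIntegrable _ _)
        intro s hs
        exact hfs s hs.2
      have hid : (∫ s in t..A, M * s) = M * ((A ^ 2 - t ^ 2) / 2) := by
        rw [intervalIntegral.integral_const_mul, integral_id]
      nlinarith [hadd, hmono, hid]
    rw [eventually_atBot]
    refine ⟨min A (-(|K| + 1)), fun t ht => ?_⟩
    have htA : t ≤ A := le_trans ht (min_le_left _ _)
    have htK : t ≤ -(|K| + 1) := le_trans ht (min_le_right _ _)
    have ht2 : |K| + 1 ≤ t ^ 2 := by nlinarith [abs_nonneg K]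
    exact auxdiv C K t _ ht2 (key t htA)
  · -- atTop case
    rw [Filter.tendsto_atTop]
    intro C
    set M := 2 * (C + 1) with hM
    have h1 : ∀ᶠ t in atTop, M ≤ f t * t / t ^ 2 := htop.eventually_ge_atTop M
    obtain ⟨A, hA⟩ := (h1.and (eventually_ge_atTop (1 : ℝ))).exists_forall_of_atTop
    have hA1 : (1 : ℝ) ≤ A := (hA A le_rfl).2
    have hfs : ∀ s, A ≤ s → M * s ≤ f s := by
      intro s hs
      have hs1 : (1 : ℝ) ≤ s := le_trans hA1 hs
      have hspos : 0 < s := lt_of_lt_of_le (by norm_num) hs1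
      have h2 := (hA s hs).1
      have hsq : 0 < s ^ 2 := pow_two_pos_of_ne_zero hspos.ne'
      rw [le_div_iff₀ hsq] at h2
      nlinarith
    set K := (∫ s in (0:ℝ)..A, f s) - M * A ^ 2 / 2 with hK
    have key : ∀ t, A ≤ t → K + M * t ^ 2 / 2 ≤ ∫ s in (0:ℝ)..t, f s := by
      intro t ht
      have hint1 : IntervalIntegrable f volume 0 A := hf.intervalIntegrable _ _
      have hint2 : IntervalIntegrable f volume A t := hf.intervalIntegrable _ _
      have hadd : (∫ s in (0:ℝ)..A, f s) + ∫ s in A..t, f s = ∫ s in (0:ℝ)..t, f s :=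
        intervalIntegral.integral_add_adjacent_intervals hint1 hint2
      have hmono : (∫ s in A..t, M * s) ≤ ∫ s in A..t, f s := by
        apply intervalIntegral.integral_mono_on ht
          ((continuous_const.mul continuous_id).intervalIntegrable _ _) hint2
        intro s hs
        exact hfs s hs.1
      have hid : (∫ s in A..t, M * s) = M * ((t ^ 2 - A ^ 2) / 2) := by
        rw [intervalIntegral.integral_const_mul, integral_id]
      nlinarith [hadd, hmono, hid]
    rw [eventually_atTop]
    refine ⟨max A (|K| + 1), fun t ht => ?_⟩
    have htA : A ≤ t := le_trans (le_max_left _ _) ht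
    have htK : |K| + 1 ≤ t := le_trans (le_max_right _ _) ht
    have ht1 : (1 : ℝ) ≤ t := le_trans hA1 htA
    have ht2 : |K| + 1 ≤ t ^ 2 := by nlinarith [abs_nonneg K]
    exact auxdiv C K t _ ht2 (key t htA)
end
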